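/- Let s, t ∈ ℕ and let f, g : ℝ → ℂ be smooth with f ∈ 𝓔_s^1 and g ∈ 𝓔_t^1; that is, there is C_f ≥ 1 such that for all m = 0,…,s and all n ∈ ℕ there is an integrable w : ℝ → ℂ with (d/dx)^n [f(x)·(x−i)^m] = ∫_ℝ w(τ)·e^{ixτ} dτ for all x and ∫|w| ≤ C_f^{n+1}·n!, and similarly for g with s replaced by t and constant C_g. Then f·g ∈ 𝓔_{s+t}^1: there exists C ≥ 1 such that for all m = 0,…,s+t and all n ∈ ℕ there is an integrable w with (d/dx)^n [f(x)·g(x)·(x−i)^m] = ∫_ℝ w(τ)·e^{ixτ} dτ for all x and ∫|w| ≤ C^{n+1}·n!. -/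

import Mathlib

/-!
Split `m = a + b` with `a ≤ s`, `b ≤ t`, so that `f g (x - i)^m = F G` with `F = f (x - i)^a`
and `G = g (x - i)^b`. A product of functions with integrable Fourier witnesses `w₁`, `w₂` has the
witness `w₁ ⋆ w₂`, of `L¹` norm at most `‖w₁‖₁ ‖w₂‖₁`. By Leibniz, `(F G)^(n)` therefore has a
witness of norm at most `∑ₖ C(n,k) Cf^(k+1) k! Cg^(n-k+1) (n-k)! ≤ (n+1) n! (Cf Cg)^(n+1)`, and
`n + 1 ≤ 2^(n+1)` gives the constant `C = 2 Cf Cg`.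
-/

open MeasureTheory Finset Convolution FourierTransform ContinuousLinearMap

/-- `w` plays the role of the paper's `ĥ`: `h` is the Fourier integral of the integrable `w`. -/
def HasFourierWitness (h w : ℝ → ℂ) : Prop :=
  Integrable w ∧ ∀ x : ℝ, h x = ∫ τ : ℝ, w τ * Complex.exp (Complex.I * x * τ)

lemma integral_mul_cexp_I_mul_eq_fourier (w : ℝ → ℂ) (x : ℝ) :
    ∫ τ : ℝ, w τ * Complex.exp (Complex.I * x * τ) = 𝓕 w (-x / (2 * Real.pi)) := by
  rw [Real.fourier_real_eq_integral_exp_smul]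
  refine integral_congr_ae (Filter.Eventually.of_forall fun τ => ?_)
  have : ((-2 * Real.pi * τ * (-x / (2 * Real.pi)) : ℝ) : ℂ) * Complex.I = Complex.I * x * τ := by
    push_cast
    field_simp
  dsimp only
  rw [this, smul_eq_mul, mul_comm]

lemma MeasureTheory.Integrable.mul_cexp_I_mul {w : ℝ → ℂ} (hw : Integrable w) (x : ℝ) :
    Integrable fun τ : ℝ => w τ * Complex.exp (Complex.I * x * τ) := by
  refine hw.mul_bdd (c := 1) (by fun_prop) (Filter.Eventually.of_forall fun τ => le_of_eq ?_)
  rw [mul_assoc, ← Complex.ofReal_mul, Complex.norm_exp_I_mul_ofReal]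

namespace HasFourierWitness

variable {h₁ h₂ w₁ w₂ : ℝ → ℂ}

theorem mul (h₁w : HasFourierWitness h₁ w₁) (h₂w : HasFourierWitness h₂ w₂) :
    HasFourierWitness (h₁ * h₂) (w₁ ⋆[mul ℂ ℂ] w₂) := by
  refine ⟨h₁w.1.integrable_convolution _ h₂w.1, fun x => ?_⟩
  simp only [Pi.mul_apply, h₁w.2 x, h₂w.2 x, integral_mul_cexp_I_mul_eq_fourier,
    Real.fourier_mul_convolution_eq h₁w.1 h₂w.1]

theorem const_smul (c : ℂ) (hw : HasFourierWitness h₁ w₁) :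
    HasFourierWitness (c • h₁) (c • w₁) := by
  refine ⟨hw.1.smul c, fun x => ?_⟩
  simp only [Pi.smul_apply, smul_eq_mul, hw.2 x, mul_assoc, integral_const_mul]

theorem sum {ι : Type*} (s : Finset ι) {h w : ι → ℝ → ℂ}
    (hw : ∀ i ∈ s, HasFourierWitness (h i) (w i)) :
    HasFourierWitness (∑ i ∈ s, h i) (∑ i ∈ s, w i) := by
  refine ⟨integrable_finsetSum' s fun i hi => (hw i hi).1, fun x => ?_⟩
  simp only [Finset.sum_apply, Finset.sum_mul]
  rw [integral_finsetSum s fun i hi => (hw i hi).1.mul_cexp_I_mul x]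
  exact Finset.sum_congr rfl fun i hi => (hw i hi).2 x

end HasFourierWitness

lemma integral_norm_convolution_le {w₁ w₂ : ℝ → ℂ} (h₁ : Integrable w₁) (h₂ : Integrable w₂) :
    ∫ τ, ‖(w₁ ⋆[mul ℂ ℂ] w₂) τ‖ ≤ (∫ τ, ‖w₁ τ‖) * ∫ τ, ‖w₂ τ‖ := by
  have hnorm := h₁.norm.integrable_convolution (mul ℝ ℝ) h₂.norm
  calc ∫ τ, ‖(w₁ ⋆[mul ℂ ℂ] w₂) τ‖
      ≤ ∫ τ, ((fun τ : ℝ => ‖w₁ τ‖) ⋆[mul ℝ ℝ] fun τ : ℝ => ‖w₂ τ‖) τ := by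
        refine integral_mono_of_nonneg (Filter.Eventually.of_forall fun _ => norm_nonneg _)
          hnorm (Filter.Eventually.of_forall fun τ => ?_)
        simpa only [convolution_mul, norm_mul] using
          norm_integral_le_integral_norm fun t => w₁ t * w₂ (τ - t)
    _ = (∫ τ, ‖w₁ τ‖) * ∫ τ, ‖w₂ τ‖ :=
        integral_convolution (μ := volume) (ν := volume) (mul ℝ ℝ) h₁.norm h₂.norm

lemma integral_norm_finsetSum_le {ι : Type*} (s : Finset ι) {w : ι → ℝ → ℂ}
    (hw : ∀ i ∈ s, Integrable (w i)) :
    ∫ τ, ‖∑ i ∈ s, w i τ‖ ≤ ∑ i ∈ s, ∫ τ, ‖w i τ‖ := by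
  rw [← integral_finsetSum s fun i hi => (hw i hi).norm]
  exact integral_mono_of_nonneg (Filter.Eventually.of_forall fun _ => norm_nonneg _)
    (integrable_finsetSum s fun i hi => (hw i hi).norm)
    (Filter.Eventually.of_forall fun τ => norm_sum_le _ _)

lemma sum_choose_mul_pow_factorial_le {A B : ℝ} (hA : 1 ≤ A) (hB : 1 ≤ B) (n : ℕ) :
    ∑ k ∈ range (n + 1), (n.choose k : ℝ) *
        ((A ^ (k + 1) * k.factorial) * (B ^ (n - k + 1) * (n - k).factorial)) ≤
      (2 * A * B) ^ (n + 1) * n.factorial := by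
  have hterm : ∀ k ∈ range (n + 1), (n.choose k : ℝ) *
      ((A ^ (k + 1) * k.factorial) * (B ^ (n - k + 1) * (n - k).factorial)) ≤
        (A * B) ^ (n + 1) * n.factorial := by
    intro k hk
    have hkn : k ≤ n := Nat.lt_succ_iff.mp (mem_range.mp hk)
    have hfact : (n.choose k : ℝ) * k.factorial * (n - k).factorial = n.factorial := by
      exact_mod_cast Nat.choose_mul_factorial_mul_factorial hkn
    calc (n.choose k : ℝ) * ((A ^ (k + 1) * k.factorial) * (B ^ (n - k + 1) * (n - k).factorial))
        = A ^ (k + 1) * B ^ (n - k + 1) * n.factorial := by rw [← hfact]; ring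
      _ ≤ A ^ (n + 1) * B ^ (n + 1) * n.factorial := by
        gcongr
        exact Nat.sub_le n k
      _ = (A * B) ^ (n + 1) * n.factorial := by rw [mul_pow]
  have hcard : ((n + 1 : ℕ) : ℝ) ≤ 2 ^ (n + 1) := by
    exact_mod_cast (Nat.lt_two_pow_self (n := n + 1)).le
  calc _ ≤ ∑ _k ∈ range (n + 1), (A * B) ^ (n + 1) * (n.factorial : ℝ) := sum_le_sum hterm
    _ = ((n + 1 : ℕ) : ℝ) * ((A * B) ^ (n + 1) * n.factorial) := by
        rw [sum_const, card_range, nsmul_eq_mul]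
    _ ≤ 2 ^ (n + 1) * ((A * B) ^ (n + 1) * n.factorial) := by gcongr
    _ = (2 * A * B) ^ (n + 1) * n.factorial := by rw [mul_assoc 2, mul_pow]; ring

theorem HasFourierWitness.iteratedDeriv_mul {F G : ℝ → ℂ} {n : ℕ} (hF : ContDiff ℝ n F)
    (hG : ContDiff ℝ n G) {wF wG : ℕ → ℝ → ℂ}
    (hwF : ∀ k, HasFourierWitness (iteratedDeriv k F) (wF k))
    (hwG : ∀ k, HasFourierWitness (iteratedDeriv k G) (wG k)) :
    HasFourierWitness (iteratedDeriv n (F * G))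
      (∑ k ∈ range (n + 1),
        (n.choose k : ℂ) • (wF k ⋆[ContinuousLinearMap.mul ℂ ℂ] wG (n - k))) := by
  have hLeibniz : iteratedDeriv n (F * G) =
      ∑ k ∈ range (n + 1), (n.choose k : ℂ) • (iteratedDeriv k F * iteratedDeriv (n - k) G) :=
    funext fun x => by
      simp only [_root_.iteratedDeriv_mul hF.contDiffAt hG.contDiffAt, Finset.sum_apply,
        Pi.smul_apply, Pi.mul_apply, smul_eq_mul, mul_assoc]
  rw [hLeibniz]
  exact HasFourierWitness.sum _ fun k _ => ((hwF k).mul (hwG (n - k))).const_smul _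

theorem exists_fourierWitness_iteratedDeriv_mul_le {F G : ℝ → ℂ} {A B : ℝ} (hA : 1 ≤ A)
    (hB : 1 ≤ B) {n : ℕ} (hF : ContDiff ℝ n F) (hG : ContDiff ℝ n G)
    (hwF : ∀ k, ∃ w, HasFourierWitness (iteratedDeriv k F) w ∧
      ∫ τ, ‖w τ‖ ≤ A ^ (k + 1) * k.factorial)
    (hwG : ∀ k, ∃ w, HasFourierWitness (iteratedDeriv k G) w ∧
      ∫ τ, ‖w τ‖ ≤ B ^ (k + 1) * k.factorial) :
    ∃ w, HasFourierWitness (iteratedDeriv n (F * G)) w ∧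
      ∫ τ, ‖w τ‖ ≤ (2 * A * B) ^ (n + 1) * n.factorial := by
  choose wF hwF hbF using hwF
  choose wG hwG hbG using hwG
  have hconv : ∀ k, Integrable (wF k ⋆[mul ℂ ℂ] wG (n - k)) :=
    fun k => (hwF k).1.integrable_convolution _ (hwG (n - k)).1
  refine ⟨_, HasFourierWitness.iteratedDeriv_mul hF hG hwF hwG, ?_⟩
  calc ∫ τ, ‖(∑ k ∈ range (n + 1), (n.choose k : ℂ) • (wF k ⋆[mul ℂ ℂ] wG (n - k))) τ‖
      ≤ ∑ k ∈ range (n + 1), ∫ τ, ‖(n.choose k : ℂ) • (wF k ⋆[mul ℂ ℂ] wG (n - k)) τ‖ := by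
        simpa only [Finset.sum_apply, Pi.smul_apply] using
          integral_norm_finsetSum_le (range (n + 1)) fun k _ => (hconv k).smul (n.choose k : ℂ)
    _ ≤ ∑ k ∈ range (n + 1), (n.choose k : ℝ) *
          ((A ^ (k + 1) * k.factorial) * (B ^ (n - k + 1) * (n - k).factorial)) := by
        refine sum_le_sum fun k _ => ?_
        simp only [norm_smul, Complex.norm_natCast, integral_const_mul]
        gcongr
        exact (integral_norm_convolution_le (hwF k).1 (hwG (n - k)).1).trans
          (mul_le_mul (hbF k) (hbG (n - k)) (integral_nonneg fun _ => norm_nonneg _)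
            (by positivity))
    _ ≤ (2 * A * B) ^ (n + 1) * n.factorial := sum_choose_mul_pow_factorial_le hA hB n

/-- If `f ∈ 𝓔_s^1` and `g ∈ 𝓔_t^1` then `f·g ∈ 𝓔_{s+t}^1`.  Membership of a smooth
`f : ℝ → ℂ` in `𝓔_s^1` is expressed by: there is `C ≥ 1` such that for all `m = 0,…,s`
and all `n ∈ ℕ` the `n`-th derivative of `x ↦ f(x)(x−i)^m` has an integrable Fourier
witness `w` (i.e. it equals `x ↦ ∫ w(τ)e^{ixτ} dτ`) with `∫|w| ≤ C^{n+1}·n!`. -/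
theorem stmt6 (s t : ℕ) (f g : ℝ → ℂ)
    (hf : ∀ k : ℕ, ContDiff ℝ k f) (hg : ∀ k : ℕ, ContDiff ℝ k g)
    (Cf : ℝ) (hCf : 1 ≤ Cf)
    (hfE : ∀ m ≤ s, ∀ n : ℕ, ∃ w : ℝ → ℂ, Integrable w ∧
      (∀ x : ℝ, iteratedDeriv n (fun y : ℝ => f y * ((y : ℂ) - Complex.I) ^ m) x =
        ∫ τ : ℝ, w τ * Complex.exp (Complex.I * x * τ)) ∧
      (∫ τ : ℝ, ‖w τ‖) ≤ Cf ^ (n + 1) * n.factorial)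
    (Cg : ℝ) (hCg : 1 ≤ Cg)
    (hgE : ∀ m ≤ t, ∀ n : ℕ, ∃ w : ℝ → ℂ, Integrable w ∧
      (∀ x : ℝ, iteratedDeriv n (fun y : ℝ => g y * ((y : ℂ) - Complex.I) ^ m) x =
        ∫ τ : ℝ, w τ * Complex.exp (Complex.I * x * τ)) ∧
      (∫ τ : ℝ, ‖w τ‖) ≤ Cg ^ (n + 1) * n.factorial) :
    ∃ C : ℝ, 1 ≤ C ∧ ∀ m ≤ s + t, ∀ n : ℕ, ∃ w : ℝ → ℂ, Integrable w ∧
      (∀ x : ℝ, iteratedDeriv n (fun y : ℝ => f y * g y * ((y : ℂ) - Complex.I) ^ m) x =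
        ∫ τ : ℝ, w τ * Complex.exp (Complex.I * x * τ)) ∧
      (∫ τ : ℝ, ‖w τ‖) ≤ C ^ (n + 1) * n.factorial := by
  refine ⟨2 * Cf * Cg, by nlinarith, fun m hm n => ?_⟩
  obtain ⟨a, b, ha, hb, rfl⟩ : ∃ a b, a ≤ s ∧ b ≤ t ∧ m = a + b :=
    ⟨min m s, m - min m s, min_le_right m s, by omega, by omega⟩
  have hsplit : (fun y : ℝ => f y * g y * ((y : ℂ) - Complex.I) ^ (a + b)) =
      (fun y : ℝ => f y * ((y : ℂ) - Complex.I) ^ a) *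
        fun y : ℝ => g y * ((y : ℂ) - Complex.I) ^ b := by
    funext y
    simp only [Pi.mul_apply, pow_add]
    ring
  have hweight : ∀ j : ℕ, ContDiff ℝ n fun y : ℝ => ((y : ℂ) - Complex.I) ^ j :=
    fun j => (Complex.ofRealCLM.contDiff.sub contDiff_const).pow j
  obtain ⟨w, ⟨hint, hrep⟩, hbound⟩ := exists_fourierWitness_iteratedDeriv_mul_le hCf hCg
    ((hf n).mul (hweight a)) ((hg n).mul (hweight b))
    (fun k => (hfE a ha k).imp fun _ hw => ⟨⟨hw.1, hw.2.1⟩, hw.2.2⟩)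
    (fun k => (hgE b hb k).imp fun _ hw => ⟨⟨hw.1, hw.2.1⟩, hw.2.2⟩)
  exact ⟨w, hint, hsplit ▸ hrep, hbound⟩
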